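/- arXiv:1404.2630 — 3 statements merged into one kernel-verified Lean document; each statement's English description precedes it below -/
import Mathlib

section
/- Let h : ℝ² → ℝ be continuous on a neighborhood of the unit circle, let δ > 0, and let p±, q±, r± : ℝ³ → ℝ be polynomials of total degrees at most m, n, p respectively. Then the Malkin bifurcation function M_δ is a polynomial function of z of degree at most s = max{m, n, p}: there exist real numbers I₀(δ), …, I_s(δ) such that M_δ(z) = I_s(δ) z^s + ⋯ + I₁(δ) z + I₀(δ) for all z ∈ ℝ. In particular, if M_δ is not identically zero, it has at most s real zeros. -/
/-!
Write `W s = ∫₀ˢ h(cos v, sin v) dv` and `N = max m n p`. For fixed `s` the integrand is a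
linear combination, with coefficients depending only on `s`, of the functions
`z ↦ P(cos s, sin s, z + W s)` for `P` among `p±, q±, r±`, each a polynomial in `z` of degree at most `N`. Integrating in `s`
preserves the polynomials of degree at most `N`: by Lagrange interpolation the coefficients of
such a polynomial are fixed linear combinations of its values at `0, …, N`, hence integrable in `s`,
and the integral is the polynomial with the integrated coefficients. The zero count is the root
bound for a nonzero polynomial.
-/

/-- The transition function φ_δ of the regularization process. -/
noncomputable def phiTrans (δ t : ℝ) : ℝ :=
  if t ≤ -δ then -1 else if t < δ then t / δ else 1

open Polynomial MeasureTheory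

lemma measurable_phiTrans (δ : ℝ) : Measurable (phiTrans δ) := by
  unfold phiTrans
  exact Measurable.ite measurableSet_Iic measurable_const
    (Measurable.ite measurableSet_Iio (measurable_id.div_const δ) measurable_const)

lemma abs_phiTrans_le_one (δ t : ℝ) : |phiTrans δ t| ≤ 1 := by
  unfold phiTrans
  split_ifs with h₁ h₂
  · simp
  · have hδ : 0 < δ := by linarith
    rw [abs_le, le_div_iff₀ hδ, div_le_one hδ]
    constructor <;> linarith
  · simp

lemma IntervalIntegrable.mul_bdd {𝕜 : Type*} [NormedRing 𝕜] {f g : ℝ → 𝕜} {μ : Measure ℝ}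
    {a b c : ℝ} (hf : IntervalIntegrable f μ a b) (hg : AEStronglyMeasurable g μ)
    (hgc : ∀ x, ‖g x‖ ≤ c) : IntervalIntegrable (fun x => f x * g x) μ a b :=
  ⟨hf.1.mul_bdd hg.restrict (ae_of_all _ hgc), hf.2.mul_bdd hg.restrict (ae_of_all _ hgc)⟩

namespace MvPolynomial

variable {R σ : Type*} [CommSemiring R]

theorem eval_aeval_polynomial (z : R) (v : σ → R[X]) (P : MvPolynomial σ R) :
    (aeval v P).eval z = eval (fun i => (v i).eval z) P := by
  rw [aeval_def, polynomial_eval_eval₂]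
  congr
  ext; simp

theorem natDegree_aeval_le_totalDegree (v : σ → R[X]) (hv : ∀ i, (v i).natDegree ≤ 1)
    (P : MvPolynomial σ R) : (aeval v P).natDegree ≤ P.totalDegree := by
  rw [aeval_def, eval₂_eq]
  refine natDegree_sum_le_of_forall_le _ _ fun d hd => natDegree_mul_le.trans ?_
  rw [Polynomial.algebraMap_eq, natDegree_C, zero_add]
  refine (natDegree_prod_le _ _).trans ((Finset.sum_le_sum fun i _ => ?_).trans (le_totalDegree hd))
  exact natDegree_pow_le.trans (by simpa using Nat.mul_le_mul_left (d i) (hv i))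

theorem continuous_of_forall_eq_eval {f : ℝ × ℝ × ℝ → ℝ} {P : MvPolynomial (Fin 3) ℝ}
    (hf : ∀ v, f v = eval ![v.1, v.2.1, v.2.2] P) : Continuous f := by
  rw [_root_.funext hf]
  exact (continuous_eval P).comp (continuous_pi fun i => by fin_cases i <;> simp <;> fun_prop)

end MvPolynomial

open Finset in
theorem Polynomial.coeff_eq_sum_eval_mul_coeff_lagrangeBasis {F : Type*} [Field F] [CharZero F]
    {N : ℕ} {p : F[X]} (hp : p.natDegree ≤ N) (k : ℕ) :
    p.coeff k = ∑ j ∈ range (N + 1),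
      p.eval (j : F) * (Lagrange.basis (range (N + 1)) (fun i : ℕ => (i : F)) j).coeff k := by
  have hinj : Set.InjOn (fun i : ℕ => (i : F)) (range (N + 1)) :=
    fun a _ b _ hab => Nat.cast_injective hab
  have hlt : p.degree < #(range (N + 1)) := by
    rw [card_range]
    exact degree_le_natDegree.trans_lt (by exact_mod_cast Nat.lt_succ_of_le hp)
  conv_lhs => rw [Lagrange.eq_interpolate hinj hlt, Lagrange.interpolate_apply, finsetSum_coeff]
  simp only [coeff_C_mul]

variable (R : Type*) [CommRing R]

noncomputable def polynomialFunctionsLE (N : ℕ) : Submodule R (R → R) :=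
  (degreeLE R N).map (LinearMap.pi leval)

variable {R}

theorem mem_polynomialFunctionsLE {N : ℕ} {g : R → R} :
    g ∈ polynomialFunctionsLE R N ↔ ∃ Q : R[X], Q.natDegree ≤ N ∧ ∀ z, Q.eval z = g z := by
  simp only [polynomialFunctionsLE, Submodule.mem_map, mem_degreeLE, ← natDegree_le_iff_degree_le,
    funext_iff, LinearMap.pi_apply, leval_apply]

namespace polynomialFunctionsLE

variable {N : ℕ} {f g : R → R}

theorem const_mul_mem (c : R) (hf : f ∈ polynomialFunctionsLE R N) :
    (fun z => c * f z) ∈ polynomialFunctionsLE R N :=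
  Submodule.smul_mem _ c hf

theorem mul_const_mem (c : R) (hf : f ∈ polynomialFunctionsLE R N) :
    (fun z => f z * c) ∈ polynomialFunctionsLE R N := by
  simpa only [mul_comm _ c] using const_mul_mem c hf

theorem add_mem (hf : f ∈ polynomialFunctionsLE R N) (hg : g ∈ polynomialFunctionsLE R N) :
    (fun z => f z + g z) ∈ polynomialFunctionsLE R N :=
  Submodule.add_mem _ hf hg

theorem sub_mem (hf : f ∈ polynomialFunctionsLE R N) (hg : g ∈ polynomialFunctionsLE R N) :
    (fun z => f z - g z) ∈ polynomialFunctionsLE R N :=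
  Submodule.sub_mem _ hf hg

theorem neg_mem (hf : f ∈ polynomialFunctionsLE R N) :
    (fun z => -f z) ∈ polynomialFunctionsLE R N :=
  Submodule.neg_mem _ hf

theorem eval_aeval_mem {σ : Type*} (v : σ → R[X]) (hv : ∀ i, (v i).natDegree ≤ 1)
    {P : MvPolynomial σ R} (hP : P.totalDegree ≤ N) :
    (fun z => MvPolynomial.eval (fun i => (v i).eval z) P) ∈ polynomialFunctionsLE R N :=
  mem_polynomialFunctionsLE.2 ⟨MvPolynomial.aeval v P,
    (MvPolynomial.natDegree_aeval_le_totalDegree v hv P).trans hP,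
    fun z => MvPolynomial.eval_aeval_polynomial z v P⟩

theorem eval_vecCons_add_mem (x y w : R) {P : MvPolynomial (Fin 3) R} (hP : P.totalDegree ≤ N) :
    (fun z => MvPolynomial.eval ![x, y, z + w] P) ∈ polynomialFunctionsLE R N := by
  convert eval_aeval_mem ![C x, C y, X + C w]
    (fun i => by fin_cases i <;> simp [natDegree_X_le]) hP using 3 with z
  congr 1
  funext i
  fin_cases i <;> simp

open Finset in
theorem exists_eq_sum (hg : g ∈ polynomialFunctionsLE R N) :
    ∃ I : ℕ → R, ∀ z, g z = ∑ k ∈ range (N + 1), I k * z ^ k := by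
  obtain ⟨Q, hdeg, hQ⟩ := mem_polynomialFunctionsLE.1 hg
  exact ⟨Q.coeff, fun z => by rw [← hQ, eval_eq_sum_range' (Nat.lt_succ_of_le hdeg)]⟩

theorem finite_zeros_and_ncard_le [IsDomain R] (hg : g ∈ polynomialFunctionsLE R N)
    (hne : ¬ ∀ z, g z = 0) : {z | g z = 0}.Finite ∧ {z | g z = 0}.ncard ≤ N := by
  obtain ⟨Q, hdeg, hQ⟩ := mem_polynomialFunctionsLE.1 hg
  have hQ0 : Q ≠ 0 := by
    rintro rfl
    exact hne fun z => by simp [← hQ]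
  have hzeros : {z | g z = 0} = Q.rootSet R := by
    ext z
    simp [mem_rootSet, hQ0, ← hQ]
  rw [hzeros]
  exact ⟨Q.rootSet_finite R, (ncard_rootSet_le Q R).trans hdeg⟩

open Finset in
theorem intervalIntegral_mem {μ : Measure ℝ} {a b : ℝ} {f : ℝ → ℝ → ℝ}
    (hf : ∀ s, f s ∈ polynomialFunctionsLE ℝ N)
    (hint : ∀ z, IntervalIntegrable (fun s => f s z) μ a b) :
    (fun z => ∫ s in a..b, f s z ∂μ) ∈ polynomialFunctionsLE ℝ N := by
  choose Q hQdeg hQ using fun s => mem_polynomialFunctionsLE.1 (hf s)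
  have hcoeff : ∀ k, IntervalIntegrable (fun s => (Q s).coeff k) μ a b := by
    intro k
    simp_rw [coeff_eq_sum_eval_mul_coeff_lagrangeBasis (hQdeg _) k, hQ]
    simpa only [Finset.sum_fn] using IntervalIntegrable.sum (range (N + 1)) fun j _ =>
      (hint (j : ℝ)).mul_const ((Lagrange.basis (range (N + 1)) (fun i : ℕ => (i : ℝ)) j).coeff k)
  refine mem_polynomialFunctionsLE.2
    ⟨∑ k ∈ range (N + 1), C (∫ s in a..b, (Q s).coeff k ∂μ) * X ^ k, ?_, fun z => ?_⟩
  · exact natDegree_sum_le_of_forall_le _ _ fun k hk =>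
      natDegree_C_mul_X_pow_le _ k |>.trans (Nat.lt_succ_iff.1 (mem_range.1 hk))
  · simp_rw [← hQ, eval_eq_sum_range' (Nat.lt_succ_of_le (hQdeg _))]
    rw [intervalIntegral.integral_finsetSum fun k _ => (hcoeff k).mul_const _]
    simp [eval_finsetSum, intervalIntegral.integral_mul_const]

end polynomialFunctionsLE

theorem stmt_8_general (h : ℝ × ℝ → ℝ) (U : Set (ℝ × ℝ))
    (hUcirc : {w : ℝ × ℝ | w.1 ^ 2 + w.2 ^ 2 = 1} ⊆ U)
    (hh : ContinuousOn h U)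
    (δ : ℝ)
    (m n p : ℕ)
    (Pp Qp Rp Pm Qm Rm : MvPolynomial (Fin 3) ℝ)
    (hdPp : Pp.totalDegree ≤ m) (hdPm : Pm.totalDegree ≤ m)
    (hdQp : Qp.totalDegree ≤ n) (hdQm : Qm.totalDegree ≤ n)
    (hdRp : Rp.totalDegree ≤ p) (hdRm : Rm.totalDegree ≤ p)
    (pp qp rp pm qm rm : ℝ × ℝ × ℝ → ℝ)
    (hpp : ∀ v : ℝ × ℝ × ℝ, pp v = MvPolynomial.eval ![v.1, v.2.1, v.2.2] Pp)
    (hqp : ∀ v : ℝ × ℝ × ℝ, qp v = MvPolynomial.eval ![v.1, v.2.1, v.2.2] Qp)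
    (hrp : ∀ v : ℝ × ℝ × ℝ, rp v = MvPolynomial.eval ![v.1, v.2.1, v.2.2] Rp)
    (hpm : ∀ v : ℝ × ℝ × ℝ, pm v = MvPolynomial.eval ![v.1, v.2.1, v.2.2] Pm)
    (hqm : ∀ v : ℝ × ℝ × ℝ, qm v = MvPolynomial.eval ![v.1, v.2.1, v.2.2] Qm)
    (hrm : ∀ v : ℝ × ℝ × ℝ, rm v = MvPolynomial.eval ![v.1, v.2.1, v.2.2] Rm)
    (Mδ : ℝ → ℝ)
    (hM : ∀ z : ℝ, Mδ z = ∫ s in (0:ℝ)..(2 * Real.pi),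
      (let ς : ℝ × ℝ × ℝ :=
        (Real.cos s, Real.sin s, z + ∫ v in (0:ℝ)..s, h (Real.cos v, Real.sin v));
      -(1 / 2) * (h (Real.cos s, Real.sin s)
            * (-(Real.cos s) * (qp ς + qm ς) + Real.sin s * (pp ς + pm ς))
          + (rp ς + rm ς)
          + (h (Real.cos s, Real.sin s)
              * (Real.cos s * (-(qp ς) + qm ς) + Real.sin s * (pp ς - pm ς))
            + (rp ς - rm ς)) * phiTrans δ (Real.sin s)))) :
    (∃ I : ℕ → ℝ, ∀ z : ℝ,
      Mδ z = ∑ k ∈ Finset.range (max m (max n p) + 1), I k * z ^ k)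
    ∧ ((¬ ∀ z : ℝ, Mδ z = 0) →
        {z : ℝ | Mδ z = 0}.Finite ∧ {z : ℝ | Mδ z = 0}.ncard ≤ max m (max n p)) := by
  set N := max m (max n p)
  obtain ⟨H, hH, hHh⟩ : ∃ H : ℝ → ℝ, Continuous H ∧ ∀ s, h (Real.cos s, Real.sin s) = H s :=
    ⟨_, hh.comp_continuous (by fun_prop) fun s => hUcirc (Real.cos_sq_add_sin_sq s), fun _ => rfl⟩
  simp only [hHh] at hM
  have hprim : Continuous fun s => ∫ v in (0:ℝ)..s, H v :=
    intervalIntegral.continuous_primitive (fun a b => hH.intervalIntegrable a b) 0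
  obtain ⟨hPp, hPm, hQp, hQm, hRp, hRm⟩ : Pp.totalDegree ≤ N ∧ Pm.totalDegree ≤ N ∧
      Qp.totalDegree ≤ N ∧ Qm.totalDegree ≤ N ∧ Rp.totalDegree ≤ N ∧ Rm.totalDegree ≤ N := by
    omega
  have hmem : Mδ ∈ polynomialFunctionsLE ℝ N := by
    rw [show Mδ = _ from funext hM]
    refine polynomialFunctionsLE.intervalIntegral_mem (fun s => ?_) (fun z => ?_)
    · simp only [hpp, hqp, hrp, hpm, hqm, hrm]
      apply_rules [polynomialFunctionsLE.const_mul_mem, polynomialFunctionsLE.mul_const_mem,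
        polynomialFunctionsLE.add_mem, polynomialFunctionsLE.sub_mem,
        polynomialFunctionsLE.neg_mem, polynomialFunctionsLE.eval_vecCons_add_mem]
    · have := MvPolynomial.continuous_of_forall_eq_eval hpp
      have := MvPolynomial.continuous_of_forall_eq_eval hqp
      have := MvPolynomial.continuous_of_forall_eq_eval hrp
      have := MvPolynomial.continuous_of_forall_eq_eval hpm
      have := MvPolynomial.continuous_of_forall_eq_eval hqm
      have := MvPolynomial.continuous_of_forall_eq_eval hrm
      refine ((Continuous.intervalIntegrable ?_ _ _).add
        ((Continuous.intervalIntegrable ?_ _ _).mul_bdd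
          ((measurable_phiTrans δ).comp Real.measurable_sin).aestronglyMeasurable
          fun s => abs_phiTrans_le_one δ (Real.sin s))).const_mul _ <;> fun_prop
  exact ⟨polynomialFunctionsLE.exists_eq_sum hmem,
    polynomialFunctionsLE.finite_zeros_and_ncard_le hmem⟩

theorem stmt_8 (h : ℝ × ℝ → ℝ) (U : Set (ℝ × ℝ)) (hUopen : IsOpen U)
    (hUcirc : {w : ℝ × ℝ | w.1 ^ 2 + w.2 ^ 2 = 1} ⊆ U)
    (hh : ContinuousOn h U)
    (δ : ℝ) (hδ : 0 < δ)
    (m n p : ℕ)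
    (Pp Qp Rp Pm Qm Rm : MvPolynomial (Fin 3) ℝ)
    (hdPp : Pp.totalDegree ≤ m) (hdPm : Pm.totalDegree ≤ m)
    (hdQp : Qp.totalDegree ≤ n) (hdQm : Qm.totalDegree ≤ n)
    (hdRp : Rp.totalDegree ≤ p) (hdRm : Rm.totalDegree ≤ p)
    (pp qp rp pm qm rm : ℝ × ℝ × ℝ → ℝ)
    (hpp : ∀ v : ℝ × ℝ × ℝ, pp v = MvPolynomial.eval ![v.1, v.2.1, v.2.2] Pp)
    (hqp : ∀ v : ℝ × ℝ × ℝ, qp v = MvPolynomial.eval ![v.1, v.2.1, v.2.2] Qp)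
    (hrp : ∀ v : ℝ × ℝ × ℝ, rp v = MvPolynomial.eval ![v.1, v.2.1, v.2.2] Rp)
    (hpm : ∀ v : ℝ × ℝ × ℝ, pm v = MvPolynomial.eval ![v.1, v.2.1, v.2.2] Pm)
    (hqm : ∀ v : ℝ × ℝ × ℝ, qm v = MvPolynomial.eval ![v.1, v.2.1, v.2.2] Qm)
    (hrm : ∀ v : ℝ × ℝ × ℝ, rm v = MvPolynomial.eval ![v.1, v.2.1, v.2.2] Rm)
    (Mδ : ℝ → ℝ)
    (hM : ∀ z : ℝ, Mδ z = ∫ s in (0:ℝ)..(2 * Real.pi),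
      (let ς : ℝ × ℝ × ℝ :=
        (Real.cos s, Real.sin s, z + ∫ v in (0:ℝ)..s, h (Real.cos v, Real.sin v));
      -(1 / 2) * (h (Real.cos s, Real.sin s)
            * (-(Real.cos s) * (qp ς + qm ς) + Real.sin s * (pp ς + pm ς))
          + (rp ς + rm ς)
          + (h (Real.cos s, Real.sin s)
              * (Real.cos s * (-(qp ς) + qm ς) + Real.sin s * (pp ς - pm ς))
            + (rp ς - rm ς)) * phiTrans δ (Real.sin s)))) :
    (∃ I : ℕ → ℝ, ∀ z : ℝ,
      Mδ z = ∑ k ∈ Finset.range (max m (max n p) + 1), I k * z ^ k)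
    ∧ ((¬ ∀ z : ℝ, Mδ z = 0) →
        {z : ℝ | Mδ z = 0}.Finite ∧ {z : ℝ | Mδ z = 0}.ncard ≤ max m (max n p)) :=
  stmt_8_general h U hUcirc hh δ m n p Pp Qp Rp Pm Qm Rm hdPp hdPm hdQp hdQm hdRp hdRm pp qp rp pm
    qm rm hpp hqp hrp hpm hqm hrm Mδ hM
end

section
/- Let a₂₀₀, a₀₂₀, a₀₀₂, a₁₁₀, a₁₀₁, a₀₁₁, b, c ∈ ℝ and define p(x,y,w) = a₂₀₀x² + a₀₂₀y² + a₀₀₂w² + a₁₁₀xy + a₁₀₁xw + a₀₁₁yw. Then the function M̄(z) = ∫₀^{2π} −[ cos s·(−cos s·b + sin s·p(cos s, sin s, z + sin s)) + c ] ds is constant in z: M̄(z) = M̄(0) for all z ∈ ℝ. (This is the smooth Malkin bifurcation function for h(x,y) = x/√(x²+y²), for which h(cos s, sin s) = cos s and ∫₀^s h(cos v, sin v) dv = sin s, with quadratic perturbation p, constant perturbations q = b, r = c, and g⁺ = g⁻.) -/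
/-! Only the `w`-terms of `p` feel the shift `w = z + sin s`, so `M̄ z - M̄ 0` is the integral of
`φ (sin s) * cos s + ψ (cos s) * sin s` for two polynomials `φ, ψ`. Substituting `y = sin s`
(resp. `x = cos s`) turns each piece into an integral over the degenerate interval from
`sin 0 = sin 2π` (resp. `cos 0 = cos 2π`) to itself. -/

open Real intervalIntegral

theorem integral_comp_sin_mul_cos_eq_zero {φ : ℝ → ℝ} (hφ : Continuous φ) :
    ∫ s in (0 : ℝ)..2 * π, φ (sin s) * cos s = 0 := by
  have := integral_comp_mul_deriv (a := 0) (b := 2 * π)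
    (fun s _ => hasDerivAt_sin s) continuousOn_cos hφ
  simpa [sin_two_pi] using this

theorem integral_comp_cos_mul_sin_eq_zero {ψ : ℝ → ℝ} (hψ : Continuous ψ) :
    ∫ s in (0 : ℝ)..2 * π, ψ (cos s) * sin s = 0 := by
  have := integral_comp_mul_deriv (a := 0) (b := 2 * π)
    (fun s _ => hasDerivAt_cos s) continuousOn_sin.neg hψ
  simpa [cos_two_pi] using this

theorem stmt_11 (a200 a020 a002 a110 a101 a011 b c : ℝ)
    (p : ℝ → ℝ → ℝ → ℝ)
    (hp : ∀ x y w : ℝ, p x y w =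
      a200 * x ^ 2 + a020 * y ^ 2 + a002 * w ^ 2 + a110 * x * y + a101 * x * w + a011 * y * w)
    (M : ℝ → ℝ)
    (hM : ∀ z : ℝ, M z = ∫ s in (0:ℝ)..(2 * Real.pi),
      -(Real.cos s * (-(Real.cos s) * b
          + Real.sin s * p (Real.cos s) (Real.sin s) (z + Real.sin s)) + c)) :
    ∀ z : ℝ, M z = M 0 := by
  intro z
  set φ : ℝ → ℝ := fun y => -z * y * (a002 * (2 * y + z) + a011 * y)
  set ψ : ℝ → ℝ := fun x => -z * a101 * x ^ 2
  rw [hM z, hM 0, ← sub_eq_zero]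
  simp only [hp]
  rw [← integral_sub (by apply Continuous.intervalIntegrable; fun_prop)
    (by apply Continuous.intervalIntegrable; fun_prop)]
  calc _ = ∫ s in (0 : ℝ)..2 * π, (φ (sin s) * cos s + ψ (cos s) * sin s) := by
          congr 1; ext s; ring
    _ = 0 := by
      rw [integral_add (by apply Continuous.intervalIntegrable; fun_prop)
        (by apply Continuous.intervalIntegrable; fun_prop),
        integral_comp_sin_mul_cos_eq_zero (by fun_prop),
        integral_comp_cos_mul_sin_eq_zero (by fun_prop), add_zero]
end

section
/- Let δ > 0 and let φ_δ be the transition function. Let p±(x,y,w) = a±₂₀₀x² + a±₀₂₀y² + a±₀₀₂w² + a±₁₁₀xy + a±₁₀₁xw + a±₀₁₁yw, q± = b±, r± = c± with real coefficients, and let M_δ be the Malkin bifurcation function for h(cos s, sin s) = cos s and ς = (cos s, sin s, z + sin s). Then: (i) ∫₀^{2π} cos²s · sin s · φ_δ(sin s) ds > 0; (ii) M_δ is an affine function of z, with M_δ(z) − M_δ(0) = −(z/2)(a⁺₁₀₁ − a⁻₁₀₁) ∫₀^{2π} cos²s · sin s · φ_δ(sin s) ds; (iii) consequently, if a⁺₁₀₁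 ≠ a⁻₁₀₁ then M_δ has exactly one zero z₀ and M_δ'(z₀) ≠ 0. -/
/-!
The integrand of `M_δ` is a polynomial of degree two in `z`. After subtracting its value at
`z = 0`, every term is of the form `cos s · g(sin s)` or `sin s · g(cos s)`, whose integral over
a period vanishes (substitute `u = sin s`, resp. `u = cos s`), except the term
`-(z/2) (a⁺₁₀₁ - a⁻₁₀₁) cos² s sin s φ_δ(sin s)`, which comes from the monomial
`x w = cos s (z + sin s)`.
Its integral is positive because `t φ_δ(t) ≥ 0`, with strict inequality for `t > 0`.
Hence `M_δ` is affine with nonzero slope when `a⁺₁₀₁ ≠ a⁻₁₀₁`.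
-/

open Real

theorem phiTrans_eq_max_min {δ : ℝ} (hδ : 0 < δ) (t : ℝ) :
    phiTrans δ t = max (-1) (min 1 (t / δ)) := by
  unfold phiTrans
  split_ifs with h₁ h₂
  · have : t / δ ≤ -1 := by rw [div_le_iff₀ hδ]; linarith
    rw [min_eq_right (by linarith), max_eq_left this]
  · have h₃ : -1 < t / δ := by rw [lt_div_iff₀ hδ]; linarith
    have h₄ : t / δ < 1 := by rw [div_lt_iff₀ hδ]; linarith
    rw [min_eq_right h₄.le, max_eq_right h₃.le]
  · have : 1 ≤ t / δ := by rw [le_div_iff₀ hδ]; linarith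
    rw [min_eq_left this, max_eq_right (by norm_num)]

theorem continuous_phiTrans {δ : ℝ} (hδ : 0 < δ) : Continuous (phiTrans δ) := by
  rw [funext (phiTrans_eq_max_min hδ)]
  fun_prop

theorem phiTrans_pos {δ t : ℝ} (hδ : 0 ≤ δ) (ht : 0 < t) : 0 < phiTrans δ t := by
  unfold phiTrans
  split_ifs with h₁ h₂
  · linarith
  · exact div_pos ht (by linarith)
  · norm_num

theorem mul_phiTrans_nonneg {δ : ℝ} (hδ : 0 ≤ δ) (t : ℝ) : 0 ≤ t * phiTrans δ t := by
  unfold phiTrans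
  split_ifs with h₁ h₂
  · nlinarith
  · rw [← mul_div_assoc]; exact div_nonneg (mul_self_nonneg t) hδ
  · nlinarith

theorem integral_deriv_mul_comp_eq_zero {a b : ℝ} {f f' g : ℝ → ℝ}
    (hf : ∀ x, HasDerivAt f (f' x) x) (hf' : Continuous f') (hg : Continuous g)
    (hab : f a = f b) : ∫ x in a..b, f' x * g (f x) = 0 := by
  have h := intervalIntegral.integral_deriv_smul_comp (a := a) (b := b) (fun x _ ↦ hf x)
    hf'.continuousOn hg
  simp only [smul_eq_mul, Function.comp_apply] at h
  rw [h, hab, intervalIntegral.integral_same]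

theorem integral_cos_mul_comp_sin {g : ℝ → ℝ} (hg : Continuous g) :
    ∫ s in (0:ℝ)..2 * π, cos s * g (sin s) = 0 :=
  integral_deriv_mul_comp_eq_zero hasDerivAt_sin continuous_cos hg (by simp)

theorem integral_sin_mul_comp_cos {g : ℝ → ℝ} (hg : Continuous g) :
    ∫ s in (0:ℝ)..2 * π, sin s * g (cos s) = 0 := by
  simpa using integral_deriv_mul_comp_eq_zero (g := fun u ↦ -g u) hasDerivAt_cos
    continuous_sin.neg hg.neg (by simp)

theorem integral_cos_sq_mul_sin_mul_comp_sin_pos {ψ : ℝ → ℝ} (hψ : Continuous ψ)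
    (hψ_nonneg : ∀ t, 0 ≤ t * ψ t) (hψ_pos : ∀ t, 0 < t → 0 < ψ t) :
    0 < ∫ s in (0:ℝ)..2 * π, cos s ^ 2 * sin s * ψ (sin s) := by
  have hcont : Continuous fun s ↦ cos s ^ 2 * sin s * ψ (sin s) := by fun_prop
  have hpos : 0 < ∫ s in (0:ℝ)..π / 2, cos s ^ 2 * sin s * ψ (sin s) := by
    refine intervalIntegral.intervalIntegral_pos_of_pos_on (hcont.intervalIntegrable _ _)
      (fun x hx ↦ ?_) (by positivity)
    have hcos : 0 < cos x := cos_pos_of_mem_Ioo ⟨by linarith [hx.1, pi_pos], hx.2⟩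
    have hsin : 0 < sin x := sin_pos_of_pos_of_lt_pi hx.1 (by linarith [hx.2, pi_pos])
    exact mul_pos (mul_pos (pow_pos hcos 2) hsin) (hψ_pos _ hsin)
  have hnonneg : 0 ≤ ∫ s in π / 2..2 * π, cos s ^ 2 * sin s * ψ (sin s) :=
    intervalIntegral.integral_nonneg (by linarith [pi_pos]) fun s _ ↦ by
      rw [mul_assoc]; exact mul_nonneg (sq_nonneg _) (hψ_nonneg _)
  rw [← intervalIntegral.integral_add_adjacent_intervals (hcont.intervalIntegrable 0 (π / 2))
    (hcont.intervalIntegrable _ _)]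
  linarith

theorem exists_unique_zero_of_sub_eq_mul {M : ℝ → ℝ} {k : ℝ} (hk : k ≠ 0)
    (hM : ∀ z, M z - M 0 = k * z) :
    ∃ z₀, M z₀ = 0 ∧ deriv M z₀ ≠ 0 ∧ ∀ z, M z = 0 → z = z₀ := by
  set c := M 0
  have hM_eq : M = fun z ↦ c + k * z := funext fun z ↦ by linarith [hM z]
  refine ⟨-c / k, ?_, ?_, fun z hz ↦ ?_⟩
  · rw [hM_eq]; field_simp; ring
  · have hderiv : HasDerivAt (fun z ↦ c + k * z) k (-c / k) := by
      simpa using ((hasDerivAt_id _).const_mul k).const_add c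
    rwa [hM_eq, hderiv.deriv]
  · rw [hM_eq] at hz
    field_simp
    linarith

noncomputable def malkinIntegrand (δ bp bm cp cm : ℝ) (pp pm : ℝ → ℝ → ℝ → ℝ) (z s : ℝ) :
    ℝ :=
  -(1 / 2) * (cos s * (-(cos s) * (bp + bm)
        + sin s * (pp (cos s) (sin s) (z + sin s) + pm (cos s) (sin s) (z + sin s)))
      + (cp + cm)
      + (cos s * (cos s * (-bp + bm)
          + sin s * (pp (cos s) (sin s) (z + sin s) - pm (cos s) (sin s) (z + sin s)))
        + (cp - cm)) * phiTrans δ (sin s))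

section QuadraticPerturbation

variable {δ ap200 ap020 ap002 ap110 ap101 ap011 am200 am020 am002 am110 am101 am011
  bp bm cp cm : ℝ} {pp pm : ℝ → ℝ → ℝ → ℝ}
  (hpp : ∀ x y w : ℝ, pp x y w =
    ap200 * x ^ 2 + ap020 * y ^ 2 + ap002 * w ^ 2
      + ap110 * x * y + ap101 * x * w + ap011 * y * w)
  (hpm : ∀ x y w : ℝ, pm x y w =
    am200 * x ^ 2 + am020 * y ^ 2 + am002 * w ^ 2
      + am110 * x * y + am101 * x * w + am011 * y * w)
include hpp hpm

theorem continuous_malkinIntegrand (hδ : 0 < δ) (z : ℝ) :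
    Continuous (malkinIntegrand δ bp bm cp cm pp pm z) := by
  have := continuous_phiTrans hδ
  unfold malkinIntegrand
  simp only [hpp, hpm]
  fun_prop

theorem malkinIntegrand_sub_eq (hδ : 0 < δ) (z : ℝ) :
    ∃ g : ℝ → ℝ, Continuous g ∧ ∀ s,
      malkinIntegrand δ bp bm cp cm pp pm z s - malkinIntegrand δ bp bm cp cm pp pm 0 s
        = cos s * g (sin s) - z / 2 * (ap101 + am101) * (sin s * cos s ^ 2)
          - z / 2 * (ap101 - am101) * (cos s ^ 2 * sin s * phiTrans δ (sin s)) := by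
  have := continuous_phiTrans hδ
  refine ⟨fun u ↦ -(z / 2) * ((ap002 + am002) * z * u
      + (2 * (ap002 + am002) + (ap011 + am011)) * u ^ 2
      + (ap002 - am002) * z * (u * phiTrans δ u)
      + (2 * (ap002 - am002) + (ap011 - am011)) * (u ^ 2 * phiTrans δ u)), by fun_prop,
    fun s ↦ ?_⟩
  simp only [malkinIntegrand, hpp, hpm]
  ring

theorem integral_malkinIntegrand_sub (hδ : 0 < δ) (z : ℝ) :
    (∫ s in (0:ℝ)..2 * π, malkinIntegrand δ bp bm cp cm pp pm z s)
      - ∫ s in (0:ℝ)..2 * π, malkinIntegrand δ bp bm cp cm pp pm 0 s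
      = -(z / 2) * (ap101 - am101)
          * ∫ s in (0:ℝ)..2 * π, cos s ^ 2 * sin s * phiTrans δ (sin s) := by
  obtain ⟨g, hg, hsub⟩ := malkinIntegrand_sub_eq hpp hpm hδ z
  have := continuous_phiTrans hδ
  have integrable {f : ℝ → ℝ} (hf : Continuous f) :
      IntervalIntegrable f MeasureTheory.volume 0 (2 * π) :=
    hf.intervalIntegrable _ _
  have hcos_g := integral_cos_mul_comp_sin hg
  have hsin_cos_sq := integral_sin_mul_comp_cos (g := fun u ↦ u ^ 2) (by fun_prop)
  rw [← intervalIntegral.integral_sub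
      ((continuous_malkinIntegrand hpp hpm hδ z).intervalIntegrable _ _)
      ((continuous_malkinIntegrand hpp hpm hδ 0).intervalIntegrable _ _),
    funext hsub,
    intervalIntegral.integral_sub (integrable (by fun_prop)) (integrable (by fun_prop)),
    intervalIntegral.integral_sub (integrable (by fun_prop)) (integrable (by fun_prop)),
    intervalIntegral.integral_const_mul, intervalIntegral.integral_const_mul, hcos_g,
    hsin_cos_sq]
  ring

end QuadraticPerturbation

theorem stmt_12 (δ : ℝ) (hδ : 0 < δ)
    (ap200 ap020 ap002 ap110 ap101 ap011 am200 am020 am002 am110 am101 am011 bp bm cp cm : ℝ)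
    (pp pm : ℝ → ℝ → ℝ → ℝ)
    (hpp : ∀ x y w : ℝ, pp x y w =
      ap200 * x ^ 2 + ap020 * y ^ 2 + ap002 * w ^ 2
        + ap110 * x * y + ap101 * x * w + ap011 * y * w)
    (hpm : ∀ x y w : ℝ, pm x y w =
      am200 * x ^ 2 + am020 * y ^ 2 + am002 * w ^ 2
        + am110 * x * y + am101 * x * w + am011 * y * w)
    (Mδ : ℝ → ℝ)
    (hM : ∀ z : ℝ, Mδ z = ∫ s in (0:ℝ)..(2 * Real.pi),
      -(1 / 2) * (Real.cos s * (-(Real.cos s) * (bp + bm)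
            + Real.sin s * (pp (Real.cos s) (Real.sin s) (z + Real.sin s)
                + pm (Real.cos s) (Real.sin s) (z + Real.sin s)))
          + (cp + cm)
          + (Real.cos s * (Real.cos s * (-bp + bm)
              + Real.sin s * (pp (Real.cos s) (Real.sin s) (z + Real.sin s)
                  - pm (Real.cos s) (Real.sin s) (z + Real.sin s)))
            + (cp - cm)) * phiTrans δ (Real.sin s))) :
    (0 < ∫ s in (0:ℝ)..(2 * Real.pi),
      Real.cos s ^ 2 * Real.sin s * phiTrans δ (Real.sin s))
    ∧ (∀ z : ℝ, Mδ z - Mδ 0 = -(z / 2) * (ap101 - am101)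
        * ∫ s in (0:ℝ)..(2 * Real.pi),
            Real.cos s ^ 2 * Real.sin s * phiTrans δ (Real.sin s))
    ∧ (ap101 ≠ am101 →
        ∃ z₀ : ℝ, Mδ z₀ = 0 ∧ deriv Mδ z₀ ≠ 0 ∧ ∀ z : ℝ, Mδ z = 0 → z = z₀) := by
  have hI_pos := integral_cos_sq_mul_sin_mul_comp_sin_pos (continuous_phiTrans hδ)
    (mul_phiTrans_nonneg hδ.le) fun _ ↦ phiTrans_pos hδ.le
  have hM_sub : ∀ z, Mδ z - Mδ 0 = -(z / 2) * (ap101 - am101)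
      * ∫ s in (0:ℝ)..2 * π, cos s ^ 2 * sin s * phiTrans δ (sin s) := fun z ↦ by
    rw [hM, hM]
    exact integral_malkinIntegrand_sub hpp hpm hδ z
  set I := ∫ s in (0:ℝ)..2 * π, cos s ^ 2 * sin s * phiTrans δ (sin s)
  refine ⟨hI_pos, hM_sub, fun hne ↦ exists_unique_zero_of_sub_eq_mul
    (k := -(ap101 - am101) / 2 * I) ?_ fun z ↦ (hM_sub z).trans (by ring)⟩
  exact mul_ne_zero (div_ne_zero (neg_ne_zero.2 (sub_ne_zero.2 hne)) two_ne_zero) hI_pos.ne'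
end
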